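/- arXiv:1903.04853 — 6 statements merged into one kernel-verified Lean document; each statement's English description precedes it below -/
import Mathlib

section
/- Let G be a locally compact Abelian group and μ, ν ∈ M(G) with μ ∗ ν = 0, μ + ν of natural spectrum, and such that the set σ(ν) ∩ μ̂(Δ(M(G)) \ Ĝ) is finite. Then μ has natural spectrum. -/
open WeakDual

/-- A measure `μ` in the measure algebra `M(G)` (modelled as a commutative complex Banach
algebra `A`, with the dual group `Ĝ` given as a subset `Ghat` of the Gelfand space
`Δ(M(G)) = characterSpace ℂ A`) has *natural spectrum* if its spectrum equals the closure of
the range of its Fourier–Stieltjes transform. -/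
def HasNaturalSpectrum {A : Type*} [NormedCommRing A] [NormedAlgebra ℂ A]
    (Ghat : Set (characterSpace ℂ A)) (μ : A) : Prop :=
  spectrum ℂ μ = closure ((fun φ : characterSpace ℂ A => φ μ) '' Ghat)

/-!
Let `T` be the closure of `μ̂(Ĝ)`. A point `φ μ ∈ σ(μ) \ T` must have `φ ν = 0` (otherwise
`φ μ = 0`, which lies in `T` because some `ψ ∈ Ĝ` has `ψ ν ≠ 0`), so it is `φ (μ + ν)` and lies
in `σ(μ + ν) ⊆ T ∪ cl(ν̂(Ĝ)) ⊆ T ∪ σ(ν)`. Hence `σ(μ) \ T` is finite. A point `z` of this set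
is isolated in `σ(μ)` and lies off `T`, so a small circle around `z` avoids both. The Riesz
idempotent `e = ∮ (z - μ)⁻¹ dz` over that circle then has `ψ e = 0` for every `ψ ∈ Ĝ`, hence
`e = 0` by uniqueness of Fourier–Stieltjes transforms, while `φ e = 2πi` for a character with
`φ μ = z`.
-/

open Metric Set

theorem ContinuousLinearMap.circleIntegral_comp_comm {E F : Type*}
    [NormedAddCommGroup E] [NormedSpace ℂ E] [CompleteSpace E]
    [NormedAddCommGroup F] [NormedSpace ℂ F] [CompleteSpace F]
    (L : E →L[ℂ] F) {f : ℂ → E} {c : ℂ} {R : ℝ} (hf : CircleIntegrable f c R) :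
    ∮ z in C(c, R), L (f z) = L (∮ z in C(c, R), f z) := by
  simp only [circleIntegral, ← map_smul]
  exact L.intervalIntegral_comp_comm hf.out

theorem circleIntegral.integral_sub_inv_of_notMem_closedBall {c w : ℂ} {R : ℝ} (hR : 0 ≤ R)
    (hw : w ∉ closedBall c R) : ∮ z in C(c, R), (z - w)⁻¹ = 0 := by
  refine DiffContOnCl.circleIntegral_eq_zero hR (DifferentiableOn.diffContOnCl ?_)
  refine ((differentiableOn_id.sub_const w).inv fun z hz => sub_ne_zero.2 ?_).mono
    (closure_ball_subset_closedBall)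
  exact ne_of_mem_of_not_mem hz hw

theorem apply_eq_zero_or_apply_eq_zero {F M₀ N₀ : Type*} [MulZeroOneClass M₀]
    [MulZeroOneClass N₀] [NoZeroDivisors N₀] [FunLike F M₀ N₀] [MonoidWithZeroHomClass F M₀ N₀]
    (φ : F) {a b : M₀} (hab : a * b = 0) : φ a = 0 ∨ φ b = 0 :=
  mul_eq_zero.1 (by rw [← map_mul, hab, map_zero])

theorem AlgHomClass.apply_resolvent {𝕜 A F : Type*} [Field 𝕜] [Ring A] [Algebra 𝕜 A]
    [FunLike F A 𝕜] [AlgHomClass F 𝕜 A 𝕜] (φ : F) {a : A} {z : 𝕜}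
    (hz : z ∈ resolventSet 𝕜 a) : φ (resolvent a z) = (z - φ a)⁻¹ := by
  refine eq_inv_of_mul_eq_one_left ?_
  have := congrArg φ (Ring.inverse_mul_cancel _ hz)
  rwa [map_mul, map_sub, map_one, AlgHomClass.commutes, Algebra.algebraMap_self_apply] at this

section RingHom

variable {R K F : Type*} [Semiring R] [Semiring K] [NoZeroDivisors K] [FunLike F R K]
  [RingHomClass F R K]

theorem image_apply_add_subset_union (S : Set F) {a b : R} (hab : a * b = 0) :
    (fun φ : F => φ (a + b)) '' S ⊆ (fun φ : F => φ a) '' S ∪ (fun φ : F => φ b) '' S := by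
  rintro - ⟨φ, hφ, rfl⟩
  rcases apply_eq_zero_or_apply_eq_zero φ hab with h | h
  · exact Or.inr ⟨φ, hφ, by simp [h]⟩
  · exact Or.inl ⟨φ, hφ, by simp [h]⟩

theorem zero_mem_image_apply_of_mul_eq_zero {S : Set F}
    (hS : ∀ x : R, (∀ φ ∈ S, φ x = 0) → x = 0) {a b : R} (hab : a * b = 0) (hb : b ≠ 0) :
    (0 : K) ∈ (fun φ : F => φ a) '' S := by
  obtain ⟨φ, hφS, hφb⟩ : ∃ φ ∈ S, φ b ≠ 0 := by
    by_contra! h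
    exact hb (hS b h)
  exact ⟨φ, hφS, (apply_eq_zero_or_apply_eq_zero φ hab).resolve_right hφb⟩

end RingHom

theorem closure_image_apply_subset_spectrum {𝕜 A F : Type*} [NormedField 𝕜] [NormedRing A]
    [NormedAlgebra 𝕜 A] [CompleteSpace A] [FunLike F A 𝕜] [AlgHomClass F 𝕜 A 𝕜]
    (S : Set F) (a : A) : closure ((fun φ : F => φ a) '' S) ⊆ spectrum 𝕜 a :=
  closure_minimal (image_subset_iff.2 fun φ _ => AlgHom.apply_mem_spectrum φ a)
    (spectrum.isClosed a)

section GelfandSpace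

variable {A : Type*} [NormedCommRing A] [NormedAlgebra ℂ A] [CompleteSpace A]
  {S : Set (characterSpace ℂ A)}

theorem spectrum_diff_closure_subset_of_mul_eq_zero
    (hS : ∀ x : A, (∀ φ ∈ S, φ x = 0) → x = 0) {a b : A} (hab : a * b = 0)
    (hnat : HasNaturalSpectrum S (a + b)) :
    spectrum ℂ a \ closure ((fun φ : characterSpace ℂ A => φ a) '' S) ⊆
      spectrum ℂ b ∩ (fun φ : characterSpace ℂ A => φ a) '' Sᶜ := by
  rintro _ ⟨hl, hlT⟩
  obtain ⟨φ, rfl⟩ := CharacterSpace.mem_spectrum_iff_exists.1 hl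
  have hφb : φ b = 0 := by
    by_contra hφb
    have hb : b ≠ 0 := by
      rintro rfl
      exact hφb (map_zero φ)
    rw [(apply_eq_zero_or_apply_eq_zero φ hab).resolve_right hφb] at hlT
    exact hlT (subset_closure (zero_mem_image_apply_of_mul_eq_zero hS hab hb))
  have hmem : φ a ∈ closure ((fun ψ : characterSpace ℂ A => ψ (a + b)) '' S) := by
    rw [← hnat]
    simpa [hφb] using CharacterSpace.apply_mem_spectrum φ (a + b)
  replace hmem := closure_union.subset (closure_mono (image_apply_add_subset_union S hab) hmem)
  exact ⟨closure_image_apply_subset_spectrum S b (hmem.resolve_left hlT), φ,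
    fun hφS => hlT (subset_closure ⟨φ, hφS, rfl⟩), rfl⟩

theorem disjoint_ball_spectrum_of_separating (hS : ∀ x : A, (∀ φ ∈ S, φ x = 0) → x = 0)
    {a : A} {c : ℂ} {r : ℝ} (hr : 0 ≤ r) (hsphere : sphere c r ⊆ resolventSet ℂ a)
    (hdisc : ∀ φ ∈ S, φ a ∉ closedBall c r) : Disjoint (ball c r) (spectrum ℂ a) := by
  have hint : CircleIntegrable (resolvent a) c r :=
    ContinuousOn.circleIntegrable hr fun z hz =>
      (spectrum.hasDerivAt_resolvent_const_left (hsphere hz)).continuousAt.continuousWithinAt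
  set e : A := ∮ z in C(c, r), resolvent a z
  have happly : ∀ ψ : characterSpace ℂ A, ψ e = ∮ z in C(c, r), (z - ψ a)⁻¹ := fun ψ =>
    ((ψ.1 : A →L[ℂ] ℂ).circleIntegral_comp_comm hint).symm.trans
      (circleIntegral.integral_congr hr fun z hz => AlgHomClass.apply_resolvent ψ (hsphere hz))
  have he : e = 0 := hS e fun ψ hψ =>
    (happly ψ).trans (circleIntegral.integral_sub_inv_of_notMem_closedBall hr (hdisc ψ hψ))
  refine Set.disjoint_right.2 fun z hz hzc => ?_
  obtain ⟨φ, rfl⟩ := CharacterSpace.mem_spectrum_iff_exists.1 hz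
  have := happly φ
  rw [he, map_zero, circleIntegral.integral_sub_inv_of_mem_ball hzc] at this
  exact Complex.two_pi_I_ne_zero this.symm

theorem hasNaturalSpectrum_of_finite_spectrum_diff_closure
    (hS : ∀ x : A, (∀ φ ∈ S, φ x = 0) → x = 0) (a : A)
    (hfin : (spectrum ℂ a \ closure ((fun φ : characterSpace ℂ A => φ a) '' S)).Finite) :
    HasNaturalSpectrum S a := by
  set T := closure ((fun φ : characterSpace ℂ A => φ a) '' S)
  refine Subset.antisymm (fun z hz => ?_) (closure_image_apply_subset_spectrum S a)
  by_contra hzT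
  have hK : IsClosed (T ∪ (spectrum ℂ a \ T) \ {z}) :=
    isClosed_closure.union hfin.sdiff.isClosed
  obtain ⟨r, hr, hrK⟩ := (nhds_basis_closedBall (x := z)).mem_iff.1
    (hK.isOpen_compl.mem_nhds fun hzK => hzK.elim hzT fun hzK => hzK.2 rfl)
  refine Set.disjoint_left.1 (disjoint_ball_spectrum_of_separating hS hr.le ?_ ?_)
    (mem_ball_self hr) hz
  · intro w hw
    by_contra hwσ
    have hwz : w ≠ z := ne_of_mem_sphere hw hr.ne'
    exact hrK (sphere_subset_closedBall hw)
      ((em (w ∈ T)).imp id fun hwT => ⟨⟨hwσ, hwT⟩, hwz⟩)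
  · exact fun ψ hψ hψr => hrK hψr (Or.inl (subset_closure ⟨ψ, hψ, rfl⟩))

end GelfandSpace

/-- Let `G` be a locally compact Abelian group and `μ, ν ∈ M(G)` with
`μ ∗ ν = 0`, `μ + ν` of natural spectrum, and such that the set
`σ(ν) ∩ μ̂(Δ(M(G)) \ Ĝ)` is finite. Then `μ` has natural spectrum.

The uniqueness theorem for Fourier–Stieltjes transforms is supplied as the hypothesis
`huniq`. -/
theorem hasNaturalSpectrum_of_mul_eq_zero_of_finite
    {A : Type*} [NormedCommRing A] [NormedAlgebra ℂ A] [CompleteSpace A]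
    (Ghat : Set (characterSpace ℂ A))
    (huniq : ∀ x : A, (∀ φ ∈ Ghat, φ x = 0) → x = 0)
    (μ ν : A) (hmul : μ * ν = 0)
    (hnat : HasNaturalSpectrum Ghat (μ + ν))
    (hfin : (spectrum ℂ ν ∩ ((fun φ : characterSpace ℂ A => φ μ) '' Ghatᶜ)).Finite) :
    HasNaturalSpectrum Ghat μ :=
  hasNaturalSpectrum_of_finite_spectrum_diff_closure huniq μ
    (hfin.subset (spectrum_diff_closure_subset_of_mul_eq_zero huniq hmul hnat))
end

section
/- Let G be a locally compact Abelian group, μ ∈ M(G) a spectrally reasonable measure, and ν ∈ M(G) a measure with natural spectrum. Then μ ∗ ν has natural spectrum. Moreover, if μ is spectrally reasonable and invertible in M(G), then μ⁻¹ is spectrally reasonable. -/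
/-! If for each `t ∈ σ(x)` one can write `x - t = u y` with `u` invertible and `y` of natural
spectrum, then `y` is not invertible, so `φ(y) → 0` along some characters `φ ∈ Ĝ`, and
`φ(x) = t + φ(u) φ(y)` with `φ(u)` bounded gives `φ(x) → t`: `x` has natural spectrum.
For `μ` spectrally reasonable and `T = ν - w` invertible (`0 ≠ w ∉ σ(ν)`), the factorisation
`μ T - t = T (μ - t T⁻¹)` applies, and then `μ ν = w μ + μ T`. For invertible `μ`, use
`μ⁻¹ + ν - t = μ⁻¹ (1 + μ (ν - t))`. -/

open WeakDual

def SpectrallyReasonable {A : Type*} [NormedCommRing A] [NormedAlgebra ℂ A]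
    (Ghat : Set (characterSpace ℂ A)) (μ : A) : Prop :=
  ∀ ν : A, HasNaturalSpectrum Ghat ν → HasNaturalSpectrum Ghat (μ + ν)

section

variable {A : Type*} [NormedCommRing A] [NormedAlgebra ℂ A] {Ghat : Set (characterSpace ℂ A)}

theorem WeakDual.CharacterSpace.apply_algebraMap (φ : characterSpace ℂ A) (c : ℂ) :
    φ (algebraMap ℂ A c) = c :=
  AlgHomClass.commutes φ c

theorem HasNaturalSpectrum.of_homeomorph {x y : A} (hx : HasNaturalSpectrum Ghat x)
    (h : ℂ ≃ₜ ℂ) (hσ : spectrum ℂ y = h '' spectrum ℂ x)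
    (hφ : ∀ φ : characterSpace ℂ A, φ y = h (φ x)) :
    HasNaturalSpectrum Ghat y := by
  rw [HasNaturalSpectrum, hσ, hx, h.image_closure, Set.image_image]
  simp only [hφ]

theorem HasNaturalSpectrum.add_algebraMap {x : A} (hx : HasNaturalSpectrum Ghat x) (b : ℂ) :
    HasNaturalSpectrum Ghat (x + algebraMap ℂ A b) := by
  refine hx.of_homeomorph (Homeomorph.addRight b) ?_ fun φ => ?_
  · rw [← spectrum.add_singleton_eq, Set.add_singleton, Homeomorph.coe_addRight]
  · rw [map_add, CharacterSpace.apply_algebraMap, Homeomorph.coe_addRight]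

theorem HasNaturalSpectrum.sub_algebraMap {x : A} (hx : HasNaturalSpectrum Ghat x) (b : ℂ) :
    HasNaturalSpectrum Ghat (x - algebraMap ℂ A b) := by
  simpa [sub_eq_add_neg] using hx.add_algebraMap (-b)

variable [CompleteSpace A]

theorem closure_image_apply_subset_spectrum_s8 (Ghat : Set (characterSpace ℂ A)) (x : A) :
    closure ((fun φ : characterSpace ℂ A => φ x) '' Ghat) ⊆ spectrum ℂ x :=
  closure_minimal (Set.image_subset_iff.mpr fun φ _ => CharacterSpace.apply_mem_spectrum φ x)
    (spectrum.isClosed x)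

namespace HasNaturalSpectrum

theorem zero {x : A} (hx : HasNaturalSpectrum Ghat x) : HasNaturalSpectrum Ghat (0 : A) := by
  rcases subsingleton_or_nontrivial A with hA | hA
  · rwa [Subsingleton.elim (0 : A) x]
  have hGhat : Ghat.Nonempty := by
    have h := spectrum.nonempty x
    rw [hx, closure_nonempty_iff] at h
    exact h.of_image
  rw [HasNaturalSpectrum, spectrum.zero_eq]
  simp only [map_zero]
  rw [hGhat.image_const, closure_singleton]

theorem smul {x : A} (hx : HasNaturalSpectrum Ghat x) (a : ℂ) :
    HasNaturalSpectrum Ghat (a • x) := by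
  rcases eq_or_ne a 0 with rfl | ha
  · simpa using hx.zero
  refine hx.of_homeomorph (Homeomorph.smulOfNeZero a ha) ?_ fun φ => map_smul φ a x
  exact (spectrum.unit_smul_eq_smul x (Units.mk0 a ha)).trans Set.image_smul.symm

theorem of_forall_sub_algebraMap_eq_mul {x : A}
    (h : ∀ t ∈ spectrum ℂ x, ∃ u y : A, IsUnit u ∧ HasNaturalSpectrum Ghat y ∧
      x - algebraMap ℂ A t = u * y) :
    HasNaturalSpectrum Ghat x := by
  refine Set.Subset.antisymm ?_ (closure_image_apply_subset_spectrum_s8 Ghat x)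
  intro t ht
  obtain ⟨u, y, hu, hy, hxy⟩ := h t ht
  have hy0 : (0 : ℂ) ∈ closure ((fun φ : characterSpace ℂ A => φ y) '' Ghat) := by
    rw [← hy, spectrum.zero_mem_iff]
    intro hyu
    refine spectrum.mem_iff.mp ht ?_
    rw [← neg_sub, hxy]
    exact (hu.mul hyu).neg
  set C := ‖u‖ * ‖(1 : A)‖ + 1
  have hC : 0 < C := by positivity
  rw [Metric.mem_closure_iff] at hy0 ⊢
  intro ε hε
  obtain ⟨-, ⟨φ, hφ, rfl⟩, hφy⟩ := hy0 (ε / C) (div_pos hε hC)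
  refine ⟨φ x, ⟨φ, hφ, rfl⟩, ?_⟩
  have hφx : φ x - t = φ u * φ y := by
    rw [← CharacterSpace.apply_algebraMap φ t, ← map_sub, hxy, map_mul]
  have hφu : ‖φ u‖ ≤ C :=
    (spectrum.norm_le_norm_mul_of_mem (CharacterSpace.apply_mem_spectrum φ u)).trans
      (le_add_of_nonneg_right zero_le_one)
  rw [dist_zero_left] at hφy
  calc dist t (φ x) = ‖φ u‖ * ‖φ y‖ := by rw [dist_comm, dist_eq_norm, hφx, norm_mul]
    _ ≤ C * ‖φ y‖ := by gcongr
    _ < C * (ε / C) := by gcongr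
    _ = ε := mul_div_cancel₀ ε hC.ne'

theorem ringInverse {x : A} (hx : HasNaturalSpectrum Ghat x) (hxu : IsUnit x) :
    HasNaturalSpectrum Ghat (Ring.inverse x) := by
  refine of_forall_sub_algebraMap_eq_mul fun t _ =>
    ⟨Ring.inverse x, (-t) • x + algebraMap ℂ A 1, hxu.ringInverse,
      (hx.smul (-t)).add_algebraMap 1, ?_⟩
  rw [map_one, Algebra.smul_def, map_neg]
  linear_combination algebraMap ℂ A t * Ring.inverse_mul_cancel x hxu

end HasNaturalSpectrum

namespace SpectrallyReasonable

theorem smul {μ : A} (hμ : SpectrallyReasonable Ghat μ) {a : ℂ} (ha : a ≠ 0) :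
    SpectrallyReasonable Ghat (a • μ) := by
  intro ν hν
  simpa [smul_add, smul_smul, ha] using (hμ _ (hν.smul a⁻¹)).smul a

theorem mul_of_isUnit {μ T : A} (hμ : SpectrallyReasonable Ghat μ)
    (hT : HasNaturalSpectrum Ghat T) (hTu : IsUnit T) :
    HasNaturalSpectrum Ghat (μ * T) :=
  HasNaturalSpectrum.of_forall_sub_algebraMap_eq_mul fun t _ =>
    ⟨T, μ + (-t) • Ring.inverse T, hTu, hμ _ ((hT.ringInverse hTu).smul (-t)), by
      rw [Algebra.smul_def, map_neg]
      linear_combination algebraMap ℂ A t * Ring.mul_inverse_cancel T hTu⟩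

theorem mul {μ ν : A} (hμ : SpectrallyReasonable Ghat μ) (hν : HasNaturalSpectrum Ghat ν) :
    HasNaturalSpectrum Ghat (μ * ν) := by
  obtain ⟨w, hw⟩ := (Set.ne_univ_iff_exists_notMem _).mp
    ((spectrum.isCompact ν).union (isCompact_singleton : IsCompact {(0 : ℂ)})).ne_univ
  rw [Set.mem_union, Set.mem_singleton_iff, not_or] at hw
  have hTu : IsUnit (ν - algebraMap ℂ A w) := by
    rw [← neg_sub]
    exact (spectrum.notMem_iff.mp hw.1).neg
  have key := hμ.smul hw.2 _ (hμ.mul_of_isUnit (hν.sub_algebraMap w) hTu)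
  rwa [Algebra.smul_def, mul_sub, mul_comm (algebraMap ℂ A w) μ, add_sub_cancel] at key

theorem ringInverse {μ : A} (hμ : SpectrallyReasonable Ghat μ) (hμu : IsUnit μ) :
    SpectrallyReasonable Ghat (Ring.inverse μ) := fun ν hν =>
  HasNaturalSpectrum.of_forall_sub_algebraMap_eq_mul fun t _ =>
    ⟨Ring.inverse μ, μ * (ν - algebraMap ℂ A t) + algebraMap ℂ A 1, hμu.ringInverse,
      (hμ.mul (hν.sub_algebraMap t)).add_algebraMap 1, by
        rw [map_one]
        linear_combination (algebraMap ℂ A t - ν) * Ring.inverse_mul_cancel μ hμu⟩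

end SpectrallyReasonable

end

/-- Let `G` be a locally compact Abelian group, `μ ∈ M(G)` spectrally
reasonable (i.e. `μ + ν` has natural spectrum for every `ν` with natural spectrum) and
`ν ∈ M(G)` with natural spectrum. Then `μ ∗ ν` has natural spectrum. Moreover, if `μ` is
spectrally reasonable and invertible in `M(G)`, then `μ⁻¹` is spectrally reasonable. -/
theorem spectrallyReasonable_mul_and_inverse
    {A : Type*} [NormedCommRing A] [NormedAlgebra ℂ A] [CompleteSpace A]
    (Ghat : Set (characterSpace ℂ A))
    (μ : A)
    (hμ : ∀ ν : A, HasNaturalSpectrum Ghat ν → HasNaturalSpectrum Ghat (μ + ν)) :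
    (∀ ν : A, HasNaturalSpectrum Ghat ν → HasNaturalSpectrum Ghat (μ * ν)) ∧
      (IsUnit μ → ∀ ν : A, HasNaturalSpectrum Ghat ν →
        HasNaturalSpectrum Ghat (Ring.inverse μ + ν)) :=
  ⟨fun _ => SpectrallyReasonable.mul hμ, fun hμu => SpectrallyReasonable.ringInverse hμ hμu⟩
end

section
/- Let G be a locally compact Abelian group and suppose μ ∈ M(G) satisfies φ(μ) = 0 for every character φ of M(G) not in the closure of Ĝ inside Δ(M(G)). Then φ(μ) = 0 for every φ ∈ Δ(M(G)) \ Ĝ, i.e., μ ∈ M₀₀(G). -/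
open WeakDual

theorem IsClosed.compl_subset_interior_closure {X : Type*} [TopologicalSpace X] {s Z : Set X}
    (hZ : IsClosed Z) (h : (closure s)ᶜ ⊆ Z) : Zᶜ ⊆ interior (closure s) :=
  interior_maximal (Set.compl_subset_comm.mp h) hZ.isOpen_compl

theorem mem_M00_of_vanishing_off_closure_general
    {A : Type*} [NormedCommRing A] [NormedAlgebra ℂ A]
    (Ghat Sb : Set (characterSpace ℂ A))
    (hGS : closure Ghat ⊆ Sb)
    (hint : interior Sb = Ghat)
    (μ : A)
    (h : ∀ φ : characterSpace ℂ A, φ ∉ closure Ghat → φ μ = 0) :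
    ∀ φ : characterSpace ℂ A, φ ∉ Ghat → φ μ = 0 := by
  intro φ hφ
  have hZ : IsClosed {ψ : characterSpace ℂ A | ψ μ = 0} :=
    isClosed_eq (map_continuous (gelfandTransform ℂ A μ)) continuous_const
  by_contra hμ
  exact hφ (hint ▸ interior_mono hGS (hZ.compl_subset_interior_closure h hμ))

/-- Let `G` be a locally compact Abelian group and suppose `μ ∈ M(G)`
satisfies `φ(μ) = 0` for every character `φ` of `M(G)` not in the closure of `Ĝ` inside
`Δ(M(G))`. Then `φ(μ) = 0` for every `φ ∈ Δ(M(G)) \ Ĝ`, i.e. `μ ∈ M₀₀(G)`.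

`M(G)` is modelled as a commutative complex Banach algebra `A`, with `Ĝ` given as a subset
`Ghat` of the Gelfand space `Δ(M(G)) = characterSpace ℂ A`. As in the paper, we use as
hypotheses: (a) `cl(Ĝ)` is contained in the Šilov boundary `∂(M(G))` (the set `Sb`), and
(b) the theorem of Graham et al.: the interior of `∂(M(G))` in `Δ(M(G))` equals `Ĝ`. -/
theorem mem_M00_of_vanishing_off_closure
    {A : Type*} [NormedCommRing A] [NormedAlgebra ℂ A] [CompleteSpace A]
    (Ghat Sb : Set (characterSpace ℂ A))
    (hGS : closure Ghat ⊆ Sb)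
    (hint : interior Sb = Ghat)
    (μ : A)
    (h : ∀ φ : characterSpace ℂ A, φ ∉ closure Ghat → φ μ = 0) :
    ∀ φ : characterSpace ℂ A, φ ∉ Ghat → φ μ = 0 :=
  mem_M00_of_vanishing_off_closure_general Ghat Sb hGS hint μ h
end

section
/- Let G be a non-compact, non-discrete locally compact Abelian group and suppose μ ∈ M₀(G) is a probability measure all of whose convolution powers μ^{∗n} are singular with respect to the Haar measure. Then there exists h ∈ L¹(G) such that μ − h∗μ does not have natural spectrum. -/
open WeakDual Filter

/-!
Cut `μ̂` off with `k ∈ L¹`, `k̂ = 1` on a compact `K` outside which `|μ̂| ≤ 1/6`: then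
`ν = μ - k μ` has `|ν̂| ≤ 1/2` on `Ĝ`. But `ν ^ n = μ ^ n + (element of L¹)`, so singularity gives
`‖ν ^ n‖ ≥ ‖μ ^ n‖ ≥ μ̂(γ₀) ^ n = 1`, and Gelfand's formula yields `r(ν) ≥ 1`; natural spectrum
would force `r(ν) ≤ 1/2`.
-/

open scoped NNReal ENNReal

section SpectralRadius

variable {A : Type*} [NormedRing A] [NormedAlgebra ℂ A] [CompleteSpace A]

/-- Without `NormOneClass` the norm bound comes from Gelfand's formula and `‖a ^ n‖ ≤ ‖a‖ ^ n`. -/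
theorem spectralRadius_le_nnnorm_of_complex (a : A) : spectralRadius ℂ a ≤ ‖a‖₊ := by
  refine le_of_tendsto (spectrum.pow_nnnorm_pow_one_div_tendsto_nhds_spectralRadius a) ?_
  filter_upwards [eventually_ge_atTop 1] with n hn
  have hpow : ‖a ^ n‖₊ ≤ ‖a‖₊ ^ n := by simpa using nnnorm_pow_le' a hn
  calc (‖a ^ n‖₊ : ℝ≥0∞) ^ (1 / n : ℝ)
      ≤ ((‖a‖₊ : ℝ≥0∞) ^ n) ^ (1 / n : ℝ) := by gcongr; exact_mod_cast hpow
    _ = ‖a‖₊ := by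
      rw [← ENNReal.rpow_natCast, ← ENNReal.rpow_mul, mul_one_div, div_self (by positivity),
        ENNReal.rpow_one]

theorem norm_le_norm_of_mem_spectrum_of_complex {a : A} {z : ℂ} (hz : z ∈ spectrum ℂ a) :
    ‖z‖ ≤ ‖a‖ := by
  have : (‖z‖₊ : ℝ≥0∞) ≤ ‖a‖₊ :=
    (le_iSup₂ (f := fun k (_ : k ∈ spectrum ℂ a) => (‖k‖₊ : ℝ≥0∞)) z hz).trans
      (spectralRadius_le_nnnorm_of_complex a)
  exact_mod_cast this

theorem one_le_spectralRadius_of_one_le_norm_pow {a : A} (h : ∀ n : ℕ, 1 ≤ ‖a ^ (n + 1)‖) :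
    1 ≤ spectralRadius ℂ a := by
  refine ge_of_tendsto (spectrum.pow_nnnorm_pow_one_div_tendsto_nhds_spectralRadius a) ?_
  filter_upwards [eventually_ge_atTop 1] with n hn
  obtain ⟨m, rfl⟩ := Nat.exists_eq_add_of_le' hn
  have h1 : (1 : ℝ≥0∞) ≤ ‖a ^ (m + 1)‖₊ := by exact_mod_cast h m
  simpa using ENNReal.rpow_le_rpow h1 (by positivity : (0 : ℝ) ≤ 1 / (m + 1 : ℕ))

end SpectralRadius

section Characters

variable {A : Type*} [NormedCommRing A] [NormedAlgebra ℂ A]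

theorem HasNaturalSpectrum.spectralRadius_le {Ghat : Set (characterSpace ℂ A)} {a : A}
    (ha : HasNaturalSpectrum Ghat a) {r : ℝ≥0} (hr : ∀ φ ∈ Ghat, ‖φ a‖ ≤ r) :
    spectralRadius ℂ a ≤ r := by
  refine iSup₂_le fun z hz => ?_
  rw [ha] at hz
  have hball : (fun φ : characterSpace ℂ A => φ a) '' Ghat ⊆ Metric.closedBall 0 r := by
    rintro _ ⟨φ, hφ, rfl⟩
    simpa using hr φ hφ
  have hz : ‖z‖ ≤ r := by
    simpa using closure_minimal hball Metric.isClosed_closedBall hz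
  exact_mod_cast hz

theorem apply_sub_mul_self (φ : characterSpace ℂ A) (μ k : A) :
    φ (μ - k * μ) = φ μ * (1 - φ k) := by
  simp only [map_sub, map_mul]
  ring

variable [CompleteSpace A]

theorem norm_apply_sub_mul_self_le (φ : characterSpace ℂ A) (μ k : A) :
    ‖φ (μ - k * μ)‖ ≤ ‖φ μ‖ * (1 + ‖k‖) := by
  rw [apply_sub_mul_self, norm_mul]
  gcongr
  calc ‖1 - φ k‖ ≤ ‖(1 : ℂ)‖ + ‖φ k‖ := norm_sub_le _ _
    _ ≤ 1 + ‖k‖ := by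
      rw [norm_one]
      gcongr
      exact norm_le_norm_of_mem_spectrum_of_complex (AlgHom.apply_mem_spectrum φ k)

theorem one_le_norm_sub_mul_self_pow {I : Ideal A} {μ k : A} (φ : characterSpace ℂ A)
    (hφ : φ μ = 1) (hk : k ∈ I)
    (hsing : ∀ n : ℕ, ∀ h ∈ I, ‖μ ^ (n + 1) + h‖ = ‖μ ^ (n + 1)‖ + ‖h‖) (n : ℕ) :
    1 ≤ ‖(μ - k * μ) ^ (n + 1)‖ := by
  set h := μ ^ (n + 1) * ((1 - k) ^ (n + 1) - 1)
  have hdecomp : (μ - k * μ) ^ (n + 1) = μ ^ (n + 1) + h := by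
    rw [show μ - k * μ = μ * (1 - k) by ring, mul_pow]
    ring
  have hh : h ∈ I := by
    refine I.mul_mem_left _ (I.mem_of_dvd ?_ (I.neg_mem hk))
    simpa using sub_dvd_pow_sub_pow (1 - k) 1 (n + 1)
  calc (1 : ℝ) = ‖φ (μ ^ (n + 1))‖ := by simp [hφ]
    _ ≤ ‖μ ^ (n + 1)‖ :=
      norm_le_norm_of_mem_spectrum_of_complex (AlgHom.apply_mem_spectrum φ _)
    _ ≤ ‖μ ^ (n + 1)‖ + ‖h‖ := le_add_of_nonneg_right (norm_nonneg h)
    _ = ‖(μ - k * μ) ^ (n + 1)‖ := by rw [hdecomp, hsing n h hh]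

end Characters

theorem exists_L1_sub_conv_not_natural_general
    {A : Type*} [NormedCommRing A] [NormedAlgebra ℂ A] [CompleteSpace A]
    (Ghat : Set (characterSpace ℂ A))
    (γ₀ : characterSpace ℂ A)
    (L1 : Ideal A)
    (hRudin : ∀ K : Set Ghat, IsCompact K → ∃ k ∈ L1, ‖k‖ ≤ 2 ∧
      ∀ γ ∈ K, (γ : characterSpace ℂ A) k = 1)
    (μ : A)
    (hprob : γ₀ μ = 1)
    (hM0 : Tendsto (fun γ : Ghat => (γ : characterSpace ℂ A) μ) (cocompact Ghat) (nhds 0))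
    (hsing : ∀ n : ℕ, ∀ h ∈ L1, ‖μ ^ (n + 1) + h‖ = ‖μ ^ (n + 1)‖ + ‖h‖) :
    ∃ h ∈ L1, ¬ HasNaturalSpectrum Ghat (μ - h * μ) := by
  obtain ⟨K, hKc, hK⟩ :=
    mem_cocompact.mp (hM0 (Metric.closedBall_mem_nhds 0 (by norm_num : (0 : ℝ) < 1 / 6)))
  obtain ⟨k, hkL1, hknorm, hkK⟩ := hRudin K hKc
  refine ⟨k, hkL1, fun hnat => ?_⟩
  have hsmall : ∀ φ ∈ Ghat, ‖φ (μ - k * μ)‖ ≤ ((1 / 2 : ℝ≥0) : ℝ) := by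
    intro φ hφ
    by_cases hφK : ⟨φ, hφ⟩ ∈ K
    · simp [apply_sub_mul_self, hkK _ hφK]
    · have hμ : ‖φ μ‖ ≤ 1 / 6 := by simpa using hK hφK
      calc ‖φ (μ - k * μ)‖ ≤ ‖φ μ‖ * (1 + ‖k‖) := norm_apply_sub_mul_self_le φ μ k
        _ ≤ 1 / 6 * (1 + 2) := by gcongr
        _ = ((1 / 2 : ℝ≥0) : ℝ) := by norm_num
  have hbig := one_le_spectralRadius_of_one_le_norm_pow
    (one_le_norm_sub_mul_self_pow γ₀ hprob hkL1 hsing)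
  have := hbig.trans (hnat.spectralRadius_le hsmall)
  norm_num at this

/-- Let `G` be a non-compact, non-discrete locally compact Abelian group and
suppose `μ ∈ M₀(G)` is a probability measure all of whose convolution powers `μ^{∗n}` are
singular with respect to the Haar measure. Then there exists `h ∈ L¹(G)` such that
`μ − h ∗ μ` does not have natural spectrum.

Modelling in the Banach algebra `A = M(G)`:
* `γ₀ ∈ Ĝ` is the trivial character, so "probability measure" is `‖μ‖ = 1 ∧ γ₀(μ) = 1`;
* `G` non-compact ↔ `Ĝ` non-discrete (`hGnoncompact`); `G` non-discrete ↔ `Ĝ` non-compact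
  (`hGnondiscrete`);
* `L1` is the ideal `L¹(G) ⊆ M(G)`, and singularity of `μ^{∗n}` w.r.t. Haar measure is the
  norm additivity `‖μ^{∗n} + h‖ = ‖μ^{∗n}‖ + ‖h‖` for all `h ∈ L¹(G)` (`hsing`);
* `μ ∈ M₀(G)`: the transform vanishes at infinity on `Ĝ` (`hM0`);
* `hRudin` is Rudin's Theorem 2.6.8: for compact `K ⊆ Ĝ` there is `k ∈ L¹(G)` with
  `‖k‖ ≤ 2` and `k̂ = 1` on `K`. -/
theorem exists_L1_sub_conv_not_natural
    {A : Type*} [NormedCommRing A] [NormedAlgebra ℂ A] [CompleteSpace A]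
    (Ghat : Set (characterSpace ℂ A))
    (γ₀ : characterSpace ℂ A) (hγ₀ : γ₀ ∈ Ghat)
    (hGnoncompact : ¬ DiscreteTopology Ghat)
    (hGnondiscrete : ¬ IsCompact Ghat)
    (L1 : Ideal A)
    (hRudin : ∀ K : Set Ghat, IsCompact K → ∃ k ∈ L1, ‖k‖ ≤ 2 ∧
      ∀ γ ∈ K, (γ : characterSpace ℂ A) k = 1)
    (μ : A)
    (hnorm : ‖μ‖ = 1) (hprob : γ₀ μ = 1)
    (hM0 : Tendsto (fun γ : Ghat => (γ : characterSpace ℂ A) μ) (cocompact Ghat) (nhds 0))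
    (hsing : ∀ n : ℕ, ∀ h ∈ L1, ‖μ ^ (n + 1) + h‖ = ‖μ ^ (n + 1)‖ + ‖h‖) :
    ∃ h ∈ L1, ¬ HasNaturalSpectrum Ghat (μ - h * μ) :=
  exists_L1_sub_conv_not_natural_general Ghat γ₀ L1 hRudin μ hprob hM0 hsing
end

section
/- Let G be a locally compact Abelian group and let μ, ν ∈ M(G). If μ ∗ ν = 0 and μ + ν ∈ N(G) (i.e. μ + ν has natural spectrum), then every λ ∈ σ(μ) \ cl(μ̂(Ĝ)) belongs to σ(ν). -/
open WeakDual

/-- Let `G` be a locally compact Abelian group and `μ, ν ∈ M(G)`. If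
`μ ∗ ν = 0` and `μ + ν ∈ N(G)` (has natural spectrum), then every
`λ ∈ σ(μ) \ cl(μ̂(Ĝ))` belongs to `σ(ν)`. -/
theorem mem_spectrum_of_mul_eq_zero_of_natural_add
    {A : Type*} [NormedCommRing A] [NormedAlgebra ℂ A] [CompleteSpace A]
    (Ghat : Set (characterSpace ℂ A))
    (μ ν : A) (hmul : μ * ν = 0)
    (hnat : HasNaturalSpectrum Ghat (μ + ν)) :
    ∀ lam ∈ spectrum ℂ μ \ closure ((fun φ : characterSpace ℂ A => φ μ) '' Ghat),
      lam ∈ spectrum ℂ ν := by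
  rintro lam ⟨hlam, hcl⟩
  have hnt : Nontrivial A := by
    rcases subsingleton_or_nontrivial A with h | h
    · exact absurd hlam (by simp [spectrum.mem_iff, isUnit_of_subsingleton])
    · exact h
  by_cases h0 : lam = 0
  · subst h0
    by_cases hν : (0 : ℂ) ∈ spectrum ℂ ν
    · exact hν
    · exfalso
      have huν : IsUnit ν := by
        have := spectrum.notMem_iff.mp hν
        simpa using this.neg
      obtain ⟨u, rfl⟩ := huν
      have hμ0 : μ = 0 := by
        have : μ * (↑u * ↑u⁻¹) = 0 * ↑u⁻¹ := by
          rw [← mul_assoc, hmul]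
        simpa using this
      subst hμ0
      rcases Set.eq_empty_or_nonempty Ghat with hG | ⟨ψ, hψ⟩
      · have h1 := hnat
        rw [HasNaturalSpectrum, hG] at h1
        simp only [Set.image_empty, closure_empty] at h1
        exact (spectrum.nonempty ((0 : A) + ↑u)).ne_empty h1
      · exact hcl (subset_closure ⟨ψ, hψ, by simp⟩)
  · have hmem : lam ∈ spectrum ℂ (μ + ν) := by
      by_contra h
      have hu : IsUnit (algebraMap ℂ A lam - (μ + ν)) := spectrum.notMem_iff.mp h
      have key : (algebraMap ℂ A lam - μ) * (algebraMap ℂ A lam - ν)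
          = algebraMap ℂ A lam * (algebraMap ℂ A lam - (μ + ν)) := by
        have : μ * ν = 0 := hmul
        ring_nf
        linear_combination this
      have hlamu : IsUnit (algebraMap ℂ A lam) := (Ne.isUnit h0).map (algebraMap ℂ A)
      have : IsUnit ((algebraMap ℂ A lam - μ) * (algebraMap ℂ A lam - ν)) := by
        rw [key]; exact hlamu.mul hu
      exact (spectrum.mem_iff.mp hlam) (isUnit_of_mul_isUnit_left this)
    rw [hnat] at hmem
    have himg : ((fun φ : characterSpace ℂ A => φ (μ + ν)) '' Ghat)
        ⊆ ((fun φ : characterSpace ℂ A => φ μ) '' Ghat)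
          ∪ ((fun φ : characterSpace ℂ A => φ ν) '' Ghat) := by
      rintro x ⟨ψ, hψ, rfl⟩
      have hz : ψ μ * ψ ν = 0 := by rw [← map_mul, hmul, map_zero]
      rcases mul_eq_zero.mp hz with h | h
      · exact Or.inr ⟨ψ, hψ, by simp [map_add, h]⟩
      · exact Or.inl ⟨ψ, hψ, by simp [map_add, h]⟩
    have := (closure_mono himg) hmem
    rw [closure_union] at this
    rcases this with h | h
    · exact absurd h hcl
    · refine (IsClosed.closure_subset_iff (spectrum.isClosed (𝕜 := ℂ) ν)).mpr ?_ h
      rintro x ⟨ψ, hψ, rfl⟩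
      exact AlgHom.apply_mem_spectrum (AlgHomClass.toAlgHom ψ : A →ₐ[ℂ] ℂ) ν
end

section
/- Let G be a compact Abelian group. For μ ∈ M₀₀(G) and ν ∈ N(G), every accumulation point λ of σ(μ + ν) attained by characters outside Ĝ satisfies λ ∈ cl((μ̂ + ν̂)(Ĝ)). -/
open WeakDual Filter Topology

/-- Let `G` be a compact Abelian group (so `Ĝ = Ghat` is discrete),
`μ ∈ M₀₀(G)` (i.e. `φ(μ) = 0` for all characters `φ ∈ Δ(M(G)) \ Ĝ`; in particular
`μ ∈ M₀(G)`, encoded by `hM0`) and `ν ∈ N(G)` a measure with natural spectrum. Then every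
accumulation point `λ` of `σ(μ + ν)` attained by characters outside `Ĝ` — i.e. `λ` is the
limit of a sequence of pairwise distinct values `φ_k(μ + ν)` with `φ_k ∈ Δ(M(G)) \ Ĝ` —
satisfies `λ ∈ cl((μ̂ + ν̂)(Ĝ))`. -/
theorem accumulation_point_mem_closure_range
    {A : Type*} [NormedCommRing A] [NormedAlgebra ℂ A] [CompleteSpace A]
    (Ghat : Set (characterSpace ℂ A))
    (hdiscrete : DiscreteTopology Ghat)
    (μ ν : A)
    (hμ : ∀ φ : characterSpace ℂ A, φ ∉ Ghat → φ μ = 0)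
    (hM0 : ∀ ε : ℝ, 0 < ε →
      {γ : Ghat | ε < ‖(γ : characterSpace ℂ A) μ‖}.Finite)
    (hν : HasNaturalSpectrum Ghat ν)
    (lam : ℂ) (φ : ℕ → characterSpace ℂ A)
    (hout : ∀ k, φ k ∉ Ghat)
    (hdist : Function.Injective fun k => φ k (μ + ν))
    (hconv : Tendsto (fun k => φ k (μ + ν)) atTop (𝓝 lam)) :
    lam ∈ closure ((fun ψ : characterSpace ℂ A => ψ (μ + ν)) '' Ghat) := by
  have key : ∀ k, φ k (μ + ν) = φ k ν := fun k => by
    rw [map_add, hμ _ (hout k), zero_add]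
  rw [Metric.mem_closure_iff]
  intro ε hε
  have hS : {γ : Ghat | ε/4 < ‖(γ : characterSpace ℂ A) μ‖}.Finite :=
    hM0 _ (by linarith)
  by_cases hcl : ∃ γ : Ghat, ‖(γ : characterSpace ℂ A) ν - lam‖ < ε/2 ∧
      ‖(γ : characterSpace ℂ A) μ‖ ≤ ε/4
  · obtain ⟨γ, h1, h2⟩ := hcl
    refine ⟨(γ : characterSpace ℂ A) (μ + ν), ⟨γ, γ.2, rfl⟩, ?_⟩
    rw [map_add, Complex.dist_eq]
    calc ‖lam - ((γ : characterSpace ℂ A) μ + (γ : characterSpace ℂ A) ν)‖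
        ≤ ‖lam - (γ : characterSpace ℂ A) ν‖
          + ‖(γ : characterSpace ℂ A) μ‖ := by
          rw [show lam - ((γ : characterSpace ℂ A) μ + (γ : characterSpace ℂ A) ν)
              = (lam - (γ : characterSpace ℂ A) ν) + (-((γ : characterSpace ℂ A) μ)) by ring]
          exact (norm_add_le _ _).trans_eq (by rw [norm_neg])
      _ < ε := by
          rw [show lam - (γ : characterSpace ℂ A) ν
              = -((γ : characterSpace ℂ A) ν - lam) by ring, norm_neg]
          linarith
  · exfalso
    push_neg at hcl
    set T : Set ℂ := (fun ψ : characterSpace ℂ A => ψ ν) '' Ghat with hT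
    have hF : (Metric.ball lam (ε/2) ∩ T).Finite := by
      refine (Set.Finite.image (fun γ : Ghat => (γ : characterSpace ℂ A) ν) hS).subset ?_
      rintro z ⟨hz, ψ, hψ, rfl⟩
      have hd : ‖ψ ν - lam‖ < ε/2 := by
        rw [Metric.mem_ball, Complex.dist_eq] at hz
        simpa using hz
      exact ⟨⟨ψ, hψ⟩, hcl ⟨ψ, hψ⟩ hd, rfl⟩
    have hconv' : Tendsto (fun k => φ k ν) atTop (𝓝 lam) := by
      simpa only [key] using hconv
    obtain ⟨K, hK⟩ := (Metric.tendsto_atTop.mp hconv') (ε/2) (by linarith)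
    have hmem : ∀ n : ℕ, φ (n + K) (μ + ν) ∈ Metric.ball lam (ε/2) ∩ T := by
      intro n
      rw [key]
      constructor
      · rw [Metric.mem_ball]
        exact hK (n + K) (Nat.le_add_left K n)
      · have h1 : φ (n + K) ν ∈ spectrum ℂ ν :=
          WeakDual.CharacterSpace.apply_mem_spectrum (φ (n + K)) ν
        rw [hν] at h1
        have h2 := (Metric.isOpen_ball.inter_closure)
          ⟨(by rw [Metric.mem_ball]; exact hK (n + K) (Nat.le_add_left K n) :
            φ (n + K) ν ∈ Metric.ball lam (ε/2)), h1⟩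
        rw [hF.isClosed.closure_eq] at h2
        exact h2.2
    have hinj : Function.Injective fun n : ℕ => φ (n + K) (μ + ν) :=
      hdist.comp fun a b h => by omega
    exact (Set.infinite_of_injective_forall_mem hinj hmem) hF
end
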